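/- arXiv:2406.02108 — 2 statements merged into one kernel-verified Lean document; each statement's English description precedes it below -/
import Mathlib

section
/- Let τ be a finite monadic vocabulary, d a positive integer, and let 𝓜_m̄ be an ≡_d-equivalence class of τ-models of size n corresponding to the tuple m̄ = (m₁,…,m_t) with entries in ascending order, where t = 2^{|τ|}. Then every FO[τ] sentence that is true exactly in the models of 𝓜_m̄ (among size-n τ-models) has size at least 3·m_{t-1} − 3; in particular, C_d(M) ≥ 3·m_{t-1} − 3 for every M ∈ 𝓜_m̄. -/
/-!
Common definitions: unary (monadic) first-order structures, FO[τ] formulas in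
negation normal form, formula size / quantifier rank / number of quantifiers,
semantics, description complexity, the equivalence `≡_d`, and the entropies.
-/

open Filter

/-- A `τ`-model of size `n`: each point of the domain `{1,…,n}` (modelled as `Fin n`)
is assigned its `τ`-type, i.e. the set of unary predicates of `τ` that hold at it.
This is exactly the data of a structure `(M, P₁^M, …, P_k^M)` with `P_i^M ⊆ M`. -/
abbrev UModel (τ : Type) (n : ℕ) := Fin n → Set τ

/-- `|π|_M`: the number of points of `M` realizing the `τ`-type `π`. -/
noncomputable def typeCount {τ : Type} {n : ℕ} (M : UModel τ n) (π : Set τ) : ℕ :=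
  Set.ncard {a : Fin n | M a = π}

/-- FO[τ] formulas in negation normal form: atomic formulas are `x = y`, `x ≠ y`,
`P(x)` and `¬P(x)`; the connectives are `∧`, `∨` and the quantifiers `∃`, `∀`.
Variables are indexed by natural numbers. -/
inductive FO (τ : Type) : Type
  | eq : ℕ → ℕ → FO τ
  | ne : ℕ → ℕ → FO τ
  | pos : τ → ℕ → FO τ
  | npos : τ → ℕ → FO τ
  | and : FO τ → FO τ → FO τ
  | or : FO τ → FO τ → FO τ
  | ex : ℕ → FO τ → FO τ
  | all : ℕ → FO τ → FO τ

namespace FO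

variable {τ : Type}

/-- The size of a formula: the number of atomic formulas, binary connectives
(`∧`, `∨`) and quantifiers occurring in it. -/
def size : FO τ → ℕ
  | eq _ _ => 1
  | ne _ _ => 1
  | pos _ _ => 1
  | npos _ _ => 1
  | and φ ψ => φ.size + ψ.size + 1
  | or φ ψ => φ.size + ψ.size + 1
  | ex _ φ => φ.size + 1
  | all _ φ => φ.size + 1

/-- The quantifier rank: the maximum number of nested quantifiers. -/
def qrank : FO τ → ℕ
  | eq _ _ => 0
  | ne _ _ => 0
  | pos _ _ => 0
  | npos _ _ => 0
  | and φ ψ => max φ.qrank ψ.qrank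
  | or φ ψ => max φ.qrank ψ.qrank
  | ex _ φ => φ.qrank + 1
  | all _ φ => φ.qrank + 1

/-- The number of quantifier occurrences in a formula. -/
def qcount : FO τ → ℕ
  | eq _ _ => 0
  | ne _ _ => 0
  | pos _ _ => 0
  | npos _ _ => 0
  | and φ ψ => φ.qcount + ψ.qcount
  | or φ ψ => φ.qcount + ψ.qcount
  | ex _ φ => φ.qcount + 1
  | all _ φ => φ.qcount + 1

/-- The free variables of a formula. -/
def freeVars : FO τ → Finset ℕ
  | eq x y => {x, y}
  | ne x y => {x, y}
  | pos _ x => {x}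
  | npos _ x => {x}
  | and φ ψ => φ.freeVars ∪ ψ.freeVars
  | or φ ψ => φ.freeVars ∪ ψ.freeVars
  | ex x φ => φ.freeVars \ {x}
  | all x φ => φ.freeVars \ {x}

/-- A sentence is a formula with no free variables. -/
def IsSentence (φ : FO τ) : Prop := φ.freeVars = ∅

/-- Satisfaction of a formula in a model under a variable assignment. -/
def sat {n : ℕ} (M : UModel τ n) : (ℕ → Fin n) → FO τ → Prop
  | s, eq x y => s x = s y
  | s, ne x y => s x ≠ s y
  | s, pos P x => P ∈ M (s x)
  | s, npos P x => P ∉ M (s x)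
  | s, and φ ψ => sat M s φ ∧ sat M s ψ
  | s, or φ ψ => sat M s φ ∨ sat M s ψ
  | s, ex x φ => ∃ a : Fin n, sat M (Function.update s x a) φ
  | s, all x φ => ∀ a : Fin n, sat M (Function.update s x a) φ

end FO

/-- Truth of a formula in a model (for sentences, independent of the assignment). -/
def Sat {τ : Type} {n : ℕ} (M : UModel τ n) (φ : FO τ) : Prop :=
  ∀ s : ℕ → Fin n, FO.sat M s φ

/-- Two `τ`-models of size `n` are isomorphic iff every `τ`-type is realized by
the same number of points in both. -/
def Iso {τ : Type} {n : ℕ} (M M' : UModel τ n) : Prop :=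
  ∀ π : Set τ, typeCount M π = typeCount M' π

/-- A sentence `φ` defines the model `M` (among `τ`-models of size `n`) if the
models of size `n` satisfying `φ` are exactly those isomorphic to `M`. -/
def Defines {τ : Type} {n : ℕ} (φ : FO τ) (M : UModel τ n) : Prop :=
  ∀ M' : UModel τ n, Sat M' φ ↔ Iso M' M

/-- The description complexity `C(M)`: the size of the smallest FO[τ] sentence
defining `M` among `τ`-models of the same size. -/
noncomputable def descComp {τ : Type} {n : ℕ} (M : UModel τ n) : ℕ :=
  sInf {s : ℕ | ∃ φ : FO τ, φ.IsSentence ∧ Defines φ M ∧ φ.size = s}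

/-- The constant `c_τ := 15|τ|·2^{|τ|}`. -/
def cTau (τ : Type) [Fintype τ] : ℕ := 15 * Fintype.card τ * 2 ^ Fintype.card τ

/-- `M ≡_d M'`: every `τ`-type realized fewer than `d` times in one of the models
is realized exactly the same number of times in both; equivalently, the counts of
realizing points truncated at `d` coincide for all types. -/
def EquivD {τ : Type} {n : ℕ} (d : ℕ) (M M' : UModel τ n) : Prop :=
  ∀ π : Set τ, min (typeCount M π) d = min (typeCount M' π) d

/-- `φ` defines the `≡_d`-equivalence class of `M`: the size-`n` models satisfying
`φ` are exactly those `≡_d`-equivalent to `M`. -/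
def DefinesD {τ : Type} {n : ℕ} (d : ℕ) (φ : FO τ) (M : UModel τ n) : Prop :=
  ∀ M' : UModel τ n, Sat M' φ ↔ EquivD d M' M

/-- The `d`-description complexity `C_d(M)`: the size of the smallest FO_d[τ]
sentence (quantifier rank at most `d`) true exactly in the size-`n` models
`≡_d`-equivalent to `M`. -/
noncomputable def descCompD {τ : Type} {n : ℕ} (d : ℕ) (M : UModel τ n) : ℕ :=
  sInf {s : ℕ | ∃ φ : FO τ, φ.IsSentence ∧ φ.qrank ≤ d ∧ DefinesD d φ M ∧ φ.size = s}

/-- The Shannon entropy `H_S(M) = Σ_π −(|π|_M/n)·log₂(|π|_M/n)` (terms with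
`|π|_M = 0` vanish, as `Real.logb 2 0 = 0`). -/
noncomputable def HS {τ : Type} [Fintype τ] {n : ℕ} (M : UModel τ n) : ℝ :=
  ∑ π : Set τ, -((typeCount M π : ℝ) / n) * Real.logb 2 ((typeCount M π : ℝ) / n)

/-- The Boltzmann entropy `H_B(M)`: `log₂` of the number of `τ`-models with the
same domain that are isomorphic to `M`. -/
noncomputable def HB {τ : Type} {n : ℕ} (M : UModel τ n) : ℝ :=
  Real.logb 2 (Nat.card {M' : UModel τ n // Iso M' M})

/-- The Boltzmann entropy with respect to `≡_d`: `log₂` of the number of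
`τ`-models with the same domain that are `≡_d`-equivalent to `M`. -/
noncomputable def HBd {τ : Type} {n : ℕ} (d : ℕ) (M : UModel τ n) : ℝ :=
  Real.logb 2 (Nat.card {M' : UModel τ n // EquivD d M' M})

/-!
Let `k = m_{t-1}`. Moving all but `k - 1` points of type `π_{t-1}` onto type `π_t` gives a model
`M'` with `M ≡_{k-1} M'` but not `M ≡_d M'`, so every sentence defining the `≡_d`-class of `M`
separates `M` from `M'`. A back-and-forth argument shows that this forces quantifier rank at
least `k`: as long as fewer than `k - 1` points are named, every point has a partner of the same
type and the same equalities. It also forces at least `k - 1` atoms: a newly quantified variable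
only needs to be matched against the variables of its component in the graph of equality
atoms, and a connected graph has at most one vertex more than it has edges. Since
`size + 1 = #quantifiers + 2 · #atoms`, the size is at least `3k - 3`. For `C_d` one also needs
that the class has a defining sentence of rank at most `d`, a conjunction of counting clauses.
-/

namespace SimpleGraph

variable {V : Type*} (G : SimpleGraph V)

theorem reachable_edge (x y : V) : (edge x y).Reachable x y := by
  by_cases h : x = y
  · exact h ▸ Reachable.refl x
  · exact Adj.reachable ((edge_adj _ _ _ _).2 ⟨Or.inl ⟨rfl, rfl⟩, h⟩)

theorem finite_support_of_finite_edgeSet (hG : G.edgeSet.Finite) : G.support.Finite := by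
  have hfin (e : Sym2 V) : {v | v ∈ e}.Finite :=
    e.ind fun a b => (Set.toFinite {a, b}).subset fun v hv => by simpa [Sym2.mem_iff] using hv
  refine (hG.biUnion fun e _ => hfin e).subset ?_
  rintro v ⟨w, hvw⟩
  exact Set.mem_biUnion (x := s(v, w)) hvw (Sym2.mem_mk_left v w)

theorem finite_setOf_reachable (hG : G.edgeSet.Finite) (x : V) :
    {w | G.Reachable x w}.Finite := by
  refine ((G.finite_support_of_finite_edgeSet hG).insert x).subset fun w hw => ?_
  by_cases hwx : w = x
  · exact Or.inl hwx
  · exact Or.inr (mem_support_of_reachable hwx (Reachable.symm hw))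

theorem ncard_setOf_reachable_le (hG : G.edgeSet.Finite) (x : V) :
    {w | G.Reachable x w}.ncard ≤ G.edgeSet.ncard + 1 := by
  set C := G.connectedComponentMk x
  have hC : {w | G.Reachable x w} = C.supp := by
    ext w
    rw [Set.mem_ofPred_eq, ConnectedComponent.mem_supp_iff, ConnectedComponent.eq]
    exact ⟨Reachable.symm, Reachable.symm⟩
  have := hG.to_subtype
  calc {w | G.Reachable x w}.ncard = Nat.card C.supp := by rw [hC, Nat.card_coe_set_eq]
    _ ≤ Nat.card C.toSimpleGraph.edgeSet + 1 :=
      C.connected_toSimpleGraph.card_vert_le_card_edgeSet_add_one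
    _ ≤ Nat.card G.edgeSet + 1 :=
      Nat.add_le_add_right (Nat.card_le_card_of_injective _
        (Embedding.induce C.supp).mapEdgeSet.injective) 1
    _ = G.edgeSet.ncard + 1 := by rw [Nat.card_coe_set_eq]

end SimpleGraph

namespace FO

variable {τ : Type} {n : ℕ}

def atomCount : FO τ → ℕ
  | eq _ _ | ne _ _ | pos _ _ | npos _ _ => 1
  | and φ ψ | or φ ψ => φ.atomCount + ψ.atomCount
  | ex _ φ | all _ φ => φ.atomCount

theorem size_add_one (φ : FO τ) : φ.size + 1 = φ.qcount + 2 * φ.atomCount := by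
  induction φ <;> simp only [size, qcount, atomCount] <;> omega

theorem qrank_le_qcount (φ : FO τ) : φ.qrank ≤ φ.qcount := by
  induction φ <;> simp only [qrank, qcount] <;> omega

def eqGraph : FO τ → SimpleGraph ℕ
  | eq x y | ne x y => SimpleGraph.edge x y
  | pos _ _ | npos _ _ => ⊥
  | and φ ψ | or φ ψ => φ.eqGraph ⊔ ψ.eqGraph
  | ex _ φ | all _ φ => φ.eqGraph

theorem finite_edgeSet_eqGraph (φ : FO τ) : φ.eqGraph.edgeSet.Finite := by
  induction φ with
  | eq x y | ne x y => exact (SimpleGraph.edgeSet_edge x y) ▸ (Set.finite_singleton _).sdiff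
  | pos | npos => simp [eqGraph]
  | and φ ψ hφ hψ | or φ ψ hφ hψ => exact (SimpleGraph.edgeSet_sup _ _) ▸ hφ.union hψ
  | ex _ φ hφ | all _ φ hφ => exact hφ

theorem ncard_edgeSet_eqGraph_le (φ : FO τ) : φ.eqGraph.edgeSet.ncard ≤ φ.atomCount := by
  induction φ with
  | eq x y | ne x y =>
    simp only [eqGraph, atomCount, SimpleGraph.edgeSet_edge]
    exact (Set.ncard_le_ncard Set.sdiff_subset).trans (Set.ncard_singleton _).le
  | pos | npos => simp [eqGraph, atomCount]
  | and φ ψ hφ hψ | or φ ψ hφ hψ =>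
    simp only [eqGraph, atomCount, SimpleGraph.edgeSet_sup]
    exact (Set.ncard_union_le _ _).trans (Nat.add_le_add hφ hψ)
  | ex _ φ hφ | all _ φ hφ => exact hφ

theorem ncard_inter_reachable_diff_le_atomCount (φ : FO τ) (F : Set ℕ) (x : ℕ) :
    ((F ∩ {w | φ.eqGraph.Reachable x w}) \ {x}).ncard ≤ φ.atomCount := by
  have hx : x ∈ {w | φ.eqGraph.Reachable x w} := SimpleGraph.Reachable.refl x
  have hfin := φ.eqGraph.finite_setOf_reachable φ.finite_edgeSet_eqGraph x
  have := φ.eqGraph.ncard_setOf_reachable_le φ.finite_edgeSet_eqGraph x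
  have := φ.ncard_edgeSet_eqGraph_le
  calc ((F ∩ {w | φ.eqGraph.Reachable x w}) \ {x}).ncard
      ≤ ({w | φ.eqGraph.Reachable x w} \ {x}).ncard :=
        Set.ncard_le_ncard (Set.sdiff_subset_sdiff_left Set.inter_subset_right) hfin.sdiff
    _ ≤ φ.atomCount := by rw [Set.ncard_sdiff_singleton_of_mem hx]; omega

end FO

theorem Set.ncard_image_eq_ncard_image {α β γ : Type*} {f : α → β} {g : α → γ} {V : Set α}
    (h : ∀ y ∈ V, ∀ z ∈ V, (f y = f z ↔ g y = g z)) : (f '' V).ncard = (g '' V).ncard := by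
  set p : α → β × γ := fun y => (f y, g y)
  have hf : f '' V = Prod.fst '' (p '' V) := by rw [Set.image_image]
  have hg : g '' V = Prod.snd '' (p '' V) := by rw [Set.image_image]
  have hfst : (p '' V).InjOn Prod.fst := by
    rintro _ ⟨y, hy, rfl⟩ _ ⟨z, hz, rfl⟩ hyz
    exact Prod.ext hyz ((h y hy z hz).1 hyz)
  have hsnd : (p '' V).InjOn Prod.snd := by
    rintro _ ⟨y, hy, rfl⟩ _ ⟨z, hz, rfl⟩ hyz
    exact Prod.ext ((h y hy z hz).2 hyz) hyz
  rw [hf, hg, hfst.ncard_image, hsnd.ncard_image]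

section PartialIsomorphism

variable {τ : Type} {n : ℕ} {M M' : UModel τ n}

/-- On the variables `V`, the assignment `s y ↦ s' y` is a partial isomorphism from `M` to `M'`. -/
def Agree (M M' : UModel τ n) (V : Set ℕ) (s s' : ℕ → Fin n) : Prop :=
  ∀ y ∈ V, M (s y) = M' (s' y) ∧ ∀ z ∈ V, (s y = s z ↔ s' y = s' z)

namespace Agree

variable {V W : Set ℕ} {s s' : ℕ → Fin n}

theorem symm (h : Agree M M' V s s') : Agree M' M V s' s :=
  fun y hy => ⟨(h y hy).1.symm, fun z hz => ((h y hy).2 z hz).symm⟩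

theorem mono (h : Agree M M' V s s') (hWV : W ⊆ V) : Agree M M' W s s' :=
  fun y hy => ⟨(h y (hWV hy)).1, fun z hz => (h y (hWV hy)).2 z (hWV hz)⟩

theorem update (h : Agree M M' V s s') {x : ℕ} (hx : x ∉ V) (a a' : Fin n) :
    Agree M M' V (Function.update s x a) (Function.update s' x a') := by
  have hne : ∀ y ∈ V, y ≠ x := fun y hy hyx => hx (hyx ▸ hy)
  intro y hy
  simp only [Function.update_of_ne (hne y hy)]
  refine ⟨(h y hy).1, fun z hz => ?_⟩
  simpa only [Function.update_of_ne (hne z hz)] using (h y hy).2 z hz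

theorem insert_update (h : Agree M M' V s s') {x : ℕ} (hx : x ∉ V) {a a' : Fin n}
    (ha : M' a' = M a) (hpat : ∀ z ∈ V, (a = s z ↔ a' = s' z)) :
    Agree M M' (insert x V) (Function.update s x a) (Function.update s' x a') := by
  have hV := h.update hx a a'
  have hpat' : ∀ z ∈ V, (a = Function.update s x a z ↔ a' = Function.update s' x a' z) := by
    intro z hz
    have hzx : z ≠ x := fun hzx => hx (hzx ▸ hz)
    simpa only [Function.update_of_ne hzx] using hpat z hz
  rintro y (rfl | hy)
  · simp only [Function.update_self]
    refine ⟨ha.symm, ?_⟩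
    rintro z (rfl | hz)
    · simp
    · exact hpat' z hz
  · refine ⟨(hV y hy).1, ?_⟩
    rintro z (rfl | hz)
    · simpa only [Function.update_self, eq_comm] using hpat' y hy
    · exact (hV y hy).2 z hz

theorem exists_partner {q : ℕ} (hM : EquivD q M M') (h : Agree M M' V s s')
    (hq : (s '' V).ncard < q) (a : Fin n) :
    ∃ a', M' a' = M a ∧ ∀ z ∈ V, (a = s z ↔ a' = s' z) := by
  by_cases ha : a ∈ s '' V
  · obtain ⟨w, hw, rfl⟩ := ha
    exact ⟨s' w, (h w hw).1.symm, fun z hz => (h w hw).2 z hz⟩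
  set Vₐ := {z ∈ V | M (s z) = M a}
  have hsub : s '' Vₐ ⊆ s '' V := Set.image_mono (Set.sep_subset _ _)
  have hlt : (s '' Vₐ).ncard < typeCount M (M a) := by
    have hins : insert a (s '' Vₐ) ⊆ {b | M b = M a} := by
      rintro _ (rfl | ⟨z, hz, rfl⟩)
      exacts [rfl, hz.2]
    have := Set.ncard_le_ncard hins
    rwa [Set.ncard_insert_of_notMem fun h' => ha (hsub h')] at this
  have hlt' : (s' '' Vₐ).ncard < typeCount M' (M a) := by
    have hcard : (s '' Vₐ).ncard = (s' '' Vₐ).ncard :=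
      Set.ncard_image_eq_ncard_image fun y hy z hz => (h y hy.1).2 z hz.1
    have := hM (M a)
    have := Set.ncard_le_ncard hsub
    omega
  obtain ⟨a', ha', ha'V⟩ := Set.exists_mem_notMem_of_ncard_lt_ncard hlt'
  refine ⟨a', ha', fun z hz => iff_of_false (fun h' => ha ⟨z, hz, h'.symm⟩) fun h' => ?_⟩
  by_cases hz' : M (s z) = M a
  · exact ha'V ⟨z, ⟨hz, hz'⟩, h'.symm⟩
  · exact hz' ((h z hz).1.trans (h' ▸ ha'))

theorem exists_extend {q : ℕ} (hM : EquivD q M M') (h : Agree M M' V s s') (x : ℕ)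
    (hq : (s '' V).ncard < q) (a : Fin n) :
    ∃ a', Agree M M' (insert x V) (Function.update s x a) (Function.update s' x a') := by
  have hq' : (s '' (V \ {x})).ncard < q :=
    (Set.ncard_le_ncard (Set.image_mono Set.sdiff_subset)).trans_lt hq
  obtain ⟨a', ha', hpat⟩ := (h.mono Set.sdiff_subset).exists_partner hM hq' a
  have := (h.mono Set.sdiff_subset).insert_update (x := x) (by simp) ha' hpat
  exact ⟨a', by rwa [Set.insert_sdiff_singleton] at this⟩

end Agree

end PartialIsomorphism

theorem EquivD.symm {τ : Type} {n d : ℕ} {M M' : UModel τ n} (h : EquivD d M M') : EquivD d M' M :=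
  fun π => (h π).symm

section Transfer

variable {τ : Type} {n : ℕ} {M M' : UModel τ n} {q : ℕ}

theorem sat_of_agree_of_qrank_add_card_le (hM : EquivD q M M') (φ : FO τ) {V : Finset ℕ}
    {s s' : ℕ → Fin n} (hφV : φ.freeVars ⊆ V) (hq : φ.qrank + V.card ≤ q)
    (h : Agree M M' V s s') (hsat : φ.sat M s) : φ.sat M' s' := by
  have hV (W : Finset ℕ) (f : ℕ → Fin n) : (f '' W).ncard ≤ W.card :=
    (Set.ncard_image_le W.finite_toSet).trans_eq (Set.ncard_coe_finset W)
  induction φ generalizing V s s' with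
  | eq x y =>
    have hx : x ∈ V := hφV (by simp [FO.freeVars])
    exact ((h x hx).2 y (hφV (by simp [FO.freeVars]))).1 hsat
  | ne x y =>
    have hx : x ∈ V := hφV (by simp [FO.freeVars])
    exact fun h' => hsat (((h x hx).2 y (hφV (by simp [FO.freeVars]))).2 h')
  | pos P x | npos P x =>
    have hx : x ∈ V := hφV (by simp [FO.freeVars])
    simpa only [FO.sat, (h x hx).1] using hsat
  | and φ ψ ihφ ihψ =>
    simp only [FO.qrank, FO.freeVars, Finset.union_subset_iff] at hq hφV
    exact ⟨ihφ hφV.1 (by omega) h hsat.1, ihψ hφV.2 (by omega) h hsat.2⟩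
  | or φ ψ ihφ ihψ =>
    simp only [FO.qrank, FO.freeVars, Finset.union_subset_iff] at hq hφV
    exact hsat.imp (ihφ hφV.1 (by omega) h) (ihψ hφV.2 (by omega) h)
  | ex x ψ ih =>
    simp only [FO.qrank, FO.freeVars] at hq hφV
    have hψV : ψ.freeVars ⊆ insert x V := by
      rwa [Finset.subset_insert_iff, ← Finset.sdiff_singleton_eq_erase]
    have hq' : ψ.qrank + (insert x V).card ≤ q := by
      have := Finset.card_insert_le x V; omega
    obtain ⟨a, ha⟩ := hsat
    obtain ⟨a', h'⟩ := h.exists_extend hM x (by have := hV V s; omega) a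
    exact ⟨a', ih hψV hq' (by rwa [Finset.coe_insert]) ha⟩
  | all x ψ ih =>
    simp only [FO.qrank, FO.freeVars] at hq hφV
    have hψV : ψ.freeVars ⊆ insert x V := by
      rwa [Finset.subset_insert_iff, ← Finset.sdiff_singleton_eq_erase]
    have hq' : ψ.qrank + (insert x V).card ≤ q := by
      have := Finset.card_insert_le x V; omega
    intro a'
    obtain ⟨a, h'⟩ := h.symm.exists_extend hM.symm x (by have := hV V s'; omega) a'
    exact ih hψV hq' (by rw [Finset.coe_insert]; exact h'.symm) (hsat a)

end Transfer

section Components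

variable {τ : Type} {n : ℕ} {M M' : UModel τ n} {q : ℕ}

def AgreeOnComponents (M M' : UModel τ n) (F : Finset ℕ) (G : SimpleGraph ℕ)
    (s s' : ℕ → Fin n) : Prop :=
  ∀ y ∈ F, Agree M M' (↑F ∩ {z | G.Reachable y z}) s s'

namespace AgreeOnComponents

variable {F F₁ : Finset ℕ} {G G₁ : SimpleGraph ℕ} {s s' : ℕ → Fin n}

theorem symm (h : AgreeOnComponents M M' F G s s') : AgreeOnComponents M' M F G s' s :=
  fun y hy => (h y hy).symm

theorem mono (h : AgreeOnComponents M M' F G s s') (hF : F₁ ⊆ F) (hG : G₁ ≤ G) :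
    AgreeOnComponents M M' F₁ G₁ s s' :=
  fun y hy => (h y (hF hy)).mono fun _ hz => ⟨hF hz.1, hz.2.mono hG⟩

theorem exists_extend (hM : EquivD q M M') {x : ℕ} (h : AgreeOnComponents M M' (F \ {x}) G s s')
    (hq : ((↑F ∩ {w | G.Reachable x w}) \ {x}).ncard < q) (a : Fin n) :
    ∃ a', AgreeOnComponents M M' F G (Function.update s x a) (Function.update s' x a') := by
  set W := (↑F ∩ {w | G.Reachable x w}) \ {x}
  have hmem {w : ℕ} (hw : w ∈ F) (hwx : w ≠ x) : w ∈ F \ {x} := by simp [hw, hwx]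
  have hW : Agree M M' W s s' := fun y hy =>
    (h y (hmem hy.1.1 hy.2)).mono (fun z hz => ⟨hmem hz.1.1 hz.2, hy.1.2.symm.trans hz.1.2⟩) y hy
  have hWq : (s '' W).ncard < q :=
    (Set.ncard_image_le (F.finite_toSet.subset fun _ hw => hw.1.1)).trans_lt hq
  obtain ⟨a', ha'⟩ := hW.exists_extend hM x hWq a
  refine ⟨a', fun y hy => ?_⟩
  by_cases hyx : G.Reachable y x
  · refine ha'.mono fun z hz => ?_
    by_cases hzx : z = x
    · exact Or.inl hzx
    · exact Or.inr ⟨⟨hz.1, hyx.symm.trans hz.2⟩, hzx⟩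
  · have hxy : y ≠ x := fun hxy => hyx (hxy ▸ SimpleGraph.Reachable.refl y)
    refine (((h y (hmem hy hxy)).update (by simp) a a').mono fun z hz => ?_)
    exact ⟨hmem hz.1 fun hzx => hyx (hzx ▸ hz.2), hz.2⟩

end AgreeOnComponents

theorem sat_of_agreeOnComponents_of_atomCount_lt (hM : EquivD q M M') (φ : FO τ)
    {s s' : ℕ → Fin n} (hq : φ.atomCount < q)
    (h : AgreeOnComponents M M' φ.freeVars φ.eqGraph s s') (hsat : φ.sat M s) : φ.sat M' s' := by
  induction φ generalizing s s' with
  | eq x y =>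
    have hx : x ∈ (FO.eq x y : FO τ).freeVars := by simp [FO.freeVars]
    have hy : y ∈ (FO.eq x y : FO τ).freeVars := by simp [FO.freeVars]
    exact ((h x hx x ⟨hx, .refl x⟩).2 y ⟨hy, SimpleGraph.reachable_edge x y⟩).1 hsat
  | ne x y =>
    have hx : x ∈ (FO.ne x y : FO τ).freeVars := by simp [FO.freeVars]
    have hy : y ∈ (FO.ne x y : FO τ).freeVars := by simp [FO.freeVars]
    exact fun h' => hsat (((h x hx x ⟨hx, .refl x⟩).2 y ⟨hy, SimpleGraph.reachable_edge x y⟩).2 h')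
  | pos P x | npos P x =>
    have hx : x ∈ ({x} : Finset ℕ) := Finset.mem_singleton_self x
    simpa only [FO.sat, (h x hx x ⟨hx, .refl x⟩).1] using hsat
  | and φ ψ ihφ ihψ =>
    simp only [FO.atomCount] at hq
    exact ⟨ihφ (by omega) (h.mono Finset.subset_union_left le_sup_left) hsat.1,
      ihψ (by omega) (h.mono Finset.subset_union_right le_sup_right) hsat.2⟩
  | or φ ψ ihφ ihψ =>
    simp only [FO.atomCount] at hq
    exact hsat.imp (ihφ (by omega) (h.mono Finset.subset_union_left le_sup_left))
      (ihψ (by omega) (h.mono Finset.subset_union_right le_sup_right))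
  | ex x ψ ih =>
    have hW := (ψ.ncard_inter_reachable_diff_le_atomCount ψ.freeVars x).trans_lt hq
    obtain ⟨a, ha⟩ := hsat
    obtain ⟨a', h'⟩ := AgreeOnComponents.exists_extend hM h hW a
    exact ⟨a', ih hq h' ha⟩
  | all x ψ ih =>
    have hW := (ψ.ncard_inter_reachable_diff_le_atomCount ψ.freeVars x).trans_lt hq
    intro a'
    obtain ⟨a, h'⟩ := AgreeOnComponents.exists_extend hM.symm h.symm hW a'
    exact ih hq h'.symm (hsat a)

end Components

section LowerBound

variable {τ : Type} {n d q : ℕ} {M M' : UModel τ n} {φ : FO τ}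

theorem FO.IsSentence.sat_of_equivD_of_qrank_le (hφ : φ.IsSentence) (hM : EquivD q M M')
    (hq : φ.qrank ≤ q) (h : Sat M φ) : Sat M' φ := fun s =>
  sat_of_agree_of_qrank_add_card_le hM φ (V := ∅) hφ.subset (by simpa using hq)
    (by simp [Agree]) (h s)

theorem FO.IsSentence.sat_of_equivD_of_atomCount_lt (hφ : φ.IsSentence) (hM : EquivD q M M')
    (hq : φ.atomCount < q) (h : Sat M φ) : Sat M' φ := fun s =>
  sat_of_agreeOnComponents_of_atomCount_lt hM φ hq
    (fun y hy => absurd (hφ ▸ hy) (Finset.notMem_empty y)) (h s)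

theorem DefinesD.three_mul_le_size (hφ : φ.IsSentence) (hdef : DefinesD d φ M)
    (hM : EquivD q M M') (hne : ¬ EquivD d M' M) : 3 * q ≤ φ.size := by
  have hsat : Sat M φ := (hdef M).2 fun _ => rfl
  have hsat' : ¬ Sat M' φ := fun h => hne ((hdef M').1 h)
  have hqrank : q < φ.qrank :=
    lt_of_not_ge fun h => hsat' (hφ.sat_of_equivD_of_qrank_le hM h hsat)
  have hatom : q ≤ φ.atomCount :=
    le_of_not_gt fun h => hsat' (hφ.sat_of_equivD_of_atomCount_lt hM h hsat)
  have := φ.size_add_one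
  have := φ.qrank_le_qcount
  omega

theorem exists_retype (M : UModel τ n) {ρ₁ ρ₂ : Set τ} (hne : ρ₁ ≠ ρ₂) {r : ℕ}
    (hr : r ≤ typeCount M ρ₁) :
    ∃ M' : UModel τ n, typeCount M' ρ₁ = r ∧ typeCount M ρ₂ ≤ typeCount M' ρ₂ ∧
      ∀ ρ, ρ ≠ ρ₁ → ρ ≠ ρ₂ → typeCount M' ρ = typeCount M ρ := by
  classical
  obtain ⟨S, hS, hSr⟩ := Set.exists_subset_card_eq hr
  refine ⟨fun a => if M a = ρ₁ ∧ a ∉ S then ρ₂ else M a, ?_, ?_, fun ρ hρ₁ hρ₂ => ?_⟩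
  · rw [← hSr, typeCount]
    congr 1
    ext a
    by_cases ha : M a = ρ₁ ∧ a ∉ S
    · simp [ha, hne.symm]
    · have := @hS a
      simp only [Set.mem_ofPred_eq, if_neg ha]
      tauto
  · refine Set.ncard_le_ncard fun a (ha : M a = ρ₂) => ?_
    simp [ha, hne.symm]
  · unfold typeCount
    congr 1
    ext a
    by_cases ha : M a = ρ₁ ∧ a ∉ S
    · simp [ha, hρ₁.symm, hρ₂.symm]
    · simp [ha]

theorem exists_equivD_not_equivD (M : UModel τ n) {ρ₁ ρ₂ : Set τ} (hne : ρ₁ ≠ ρ₂) {k : ℕ}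
    (h₁ : k + 1 ≤ typeCount M ρ₁) (hkd : k + 1 ≤ d) (h₂ : k ≤ typeCount M ρ₂) :
    ∃ M' : UModel τ n, EquivD k M M' ∧ ¬ EquivD d M' M := by
  obtain ⟨M', h₁', h₂', hρ⟩ := exists_retype M hne (r := k) (by omega)
  refine ⟨M', fun ρ => ?_, fun h => ?_⟩
  · by_cases hρ₁ : ρ = ρ₁
    · rw [hρ₁, h₁']
      omega
    by_cases hρ₂ : ρ = ρ₂
    · rw [hρ₂]
      omega
    rw [hρ ρ hρ₁ hρ₂]
  · have := h ρ₁
    rw [h₁'] at this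
    omega

end LowerBound

namespace FO

variable {τ : Type} {n : ℕ}

def neg : FO τ → FO τ
  | eq x y => ne x y
  | ne x y => eq x y
  | pos P x => npos P x
  | npos P x => pos P x
  | and φ ψ => or φ.neg ψ.neg
  | or φ ψ => and φ.neg ψ.neg
  | ex x φ => all x φ.neg
  | all x φ => ex x φ.neg

theorem sat_neg (M : UModel τ n) (φ : FO τ) (s : ℕ → Fin n) :
    φ.neg.sat M s ↔ ¬ φ.sat M s := by
  induction φ generalizing s <;>
    simp only [neg, sat, not_and_or, not_or, not_exists, not_forall, not_not, ne_eq, *]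

theorem qrank_neg (φ : FO τ) : φ.neg.qrank = φ.qrank := by
  induction φ <;> simp [neg, qrank, *]

theorem freeVars_neg (φ : FO τ) : φ.neg.freeVars = φ.freeVars := by
  induction φ <;> simp [neg, freeVars, *]

/-- There is no closed atomic formula, so truth costs one quantifier. -/
def verum : FO τ := all 0 (eq 0 0)

section Conjunction

variable (base : FO τ) (l : List (FO τ))

theorem sat_foldr_and (M : UModel τ n) (s : ℕ → Fin n) :
    (l.foldr and base).sat M s ↔ (∀ φ ∈ l, φ.sat M s) ∧ base.sat M s := by
  induction l <;> simp [sat, and_assoc, *]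

variable {base l}

theorem qrank_foldr_and_le {k : ℕ} (hbase : base.qrank ≤ k) (hl : ∀ φ ∈ l, φ.qrank ≤ k) :
    (l.foldr and base).qrank ≤ k := by
  induction l <;> simp_all [qrank]

theorem freeVars_foldr_and_subset {S : Finset ℕ} (hbase : base.freeVars ⊆ S)
    (hl : ∀ φ ∈ l, φ.freeVars ⊆ S) : (l.foldr and base).freeVars ⊆ S := by
  induction l <;> simp_all [freeVars, Finset.union_subset_iff]

end Conjunction

open Classical in
noncomputable def literal (ρ : Set τ) (x : ℕ) (P : τ) : FO τ := if P ∈ ρ then pos P x else npos P x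

noncomputable def freshOfType [Fintype τ] (ρ : Set τ) (i : ℕ) : FO τ :=
  (Finset.univ.toList.map (literal ρ i) ++ (List.range i).map (ne i)).foldr and (eq i i)

variable (M : UModel τ n) (ρ : Set τ)

def freshPoints (s : ℕ → Fin n) (i : ℕ) : Set (Fin n) := {b | M b = ρ ∧ ∀ y < i, b ≠ s y}

theorem freshPoints_update (s : ℕ → Fin n) (i : ℕ) (a : Fin n) :
    freshPoints M ρ (Function.update s i a) (i + 1) = freshPoints M ρ s i \ {a} := by
  ext b
  simp only [freshPoints, Set.mem_sdiff, Set.mem_ofPred_eq, Set.mem_singleton_iff,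
    Nat.lt_succ_iff_lt_or_eq, or_imp, forall_and, forall_eq, Function.update_self]
  constructor
  · rintro ⟨hb, hlt, hi⟩
    exact ⟨⟨hb, fun y hy => by simpa [hy.ne] using hlt y hy⟩, hi⟩
  · rintro ⟨⟨hb, hlt⟩, hi⟩
    exact ⟨hb, fun y hy => by simpa [hy.ne] using hlt y hy, hi⟩

variable [Fintype τ]

theorem sat_freshOfType (i : ℕ) (s : ℕ → Fin n) :
    (freshOfType ρ i).sat M s ↔ M (s i) = ρ ∧ ∀ y < i, s i ≠ s y := by
  have hlit (P : τ) : (literal ρ i P).sat M s ↔ (P ∈ M (s i) ↔ P ∈ ρ) := by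
    unfold literal
    split_ifs with hP <;> simp [sat, hP]
  simp [freshOfType, sat_foldr_and, sat, hlit, Set.ext_iff]

theorem qrank_freshOfType (i : ℕ) : (freshOfType ρ i).qrank = 0 := by
  refine Nat.le_zero.1 (qrank_foldr_and_le le_rfl ?_)
  simp only [List.mem_append, List.mem_map]
  rintro _ (⟨P, -, rfl⟩ | ⟨y, -, rfl⟩)
  · unfold literal
    split_ifs <;> rfl
  · rfl

theorem freeVars_freshOfType_subset (i : ℕ) :
    (freshOfType ρ i).freeVars ⊆ Finset.range (i + 1) := by
  refine freeVars_foldr_and_subset (by simp [freeVars]) ?_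
  simp only [List.mem_append, List.mem_map, List.mem_range]
  rintro _ (⟨P, -, rfl⟩ | ⟨y, hy, rfl⟩)
  · unfold literal
    split_ifs <;> simp [freeVars]
  · intro z
    simp only [freeVars, Finset.mem_insert, Finset.mem_singleton, Finset.mem_range]
    omega

theorem sat_update_freshOfType (s : ℕ → Fin n) (i : ℕ) (a : Fin n) :
    (freshOfType ρ i).sat M (Function.update s i a) ↔ a ∈ freshPoints M ρ s i := by
  rw [sat_freshOfType]
  refine and_congr (by simp) (forall₂_congr fun y hy => ?_)
  simp [hy.ne]

noncomputable def atLeast : ℕ → ℕ → FO τ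
  | 0, _ => verum
  | 1, i => ex i (freshOfType ρ i)
  | j + 2, i => ex i (and (freshOfType ρ i) (atLeast (j + 1) (i + 1)))

theorem sat_atLeast : ∀ (j i : ℕ) (s : ℕ → Fin n),
    (atLeast ρ j i).sat M s ↔ j ≤ (freshPoints M ρ s i).ncard
  | 0, i, s => by simp [atLeast, verum, sat]
  | 1, i, s => by
    simp only [atLeast, sat, sat_update_freshOfType]
    exact (Set.ncard_pos (Set.toFinite _)).symm
  | j + 2, i, s => by
    simp only [atLeast, sat, sat_update_freshOfType, sat_atLeast (j + 1) (i + 1),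
      freshPoints_update]
    constructor
    · rintro ⟨a, ha, hj⟩
      rw [Set.ncard_sdiff_singleton_of_mem ha] at hj
      omega
    · intro hj
      obtain ⟨a, ha⟩ := Set.nonempty_of_ncard_ne_zero (s := freshPoints M ρ s i) (by omega)
      exact ⟨a, ha, by rw [Set.ncard_sdiff_singleton_of_mem ha]; omega⟩

theorem qrank_atLeast_le : ∀ j i : ℕ, (atLeast ρ j i).qrank ≤ max j 1
  | 0, _ => le_rfl
  | 1, i => by simp [atLeast, qrank, qrank_freshOfType]
  | j + 2, i => by
    have := qrank_atLeast_le (j + 1) (i + 1)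
    simp only [atLeast, qrank, qrank_freshOfType] at this ⊢
    omega

theorem freeVars_atLeast_subset : ∀ j i : ℕ, (atLeast ρ j i).freeVars ⊆ Finset.range i
  | 0, _ => by simp [atLeast, verum, freeVars]
  | 1, i => by
    intro z hz
    simp only [atLeast, freeVars, Finset.mem_sdiff, Finset.mem_singleton] at hz
    have := freeVars_freshOfType_subset ρ i hz.1
    simp only [Finset.mem_range] at this ⊢
    omega
  | j + 2, i => by
    intro z hz
    simp only [atLeast, freeVars, Finset.mem_sdiff, Finset.mem_union, Finset.mem_singleton] at hz
    have : z ∈ Finset.range (i + 1) := hz.1.elim (freeVars_freshOfType_subset ρ i ·)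
      (freeVars_atLeast_subset (j + 1) (i + 1) ·)
    simp only [Finset.mem_range] at this ⊢
    omega

end FO

section ClassSentence

open FO

variable {τ : Type} [Fintype τ] {n : ℕ}

noncomputable def countClause (d m : ℕ) (ρ : Set τ) : FO τ :=
  and (atLeast ρ m 0) (if m < d then (atLeast ρ (m + 1) 0).neg else verum)

noncomputable def classSentence (d : ℕ) (M : UModel τ n) : FO τ :=
  ((Finset.univ : Finset (Set τ)).toList.map
    fun ρ => countClause d (min (typeCount M ρ) d) ρ).foldr and verum

theorem sat_countClause (M : UModel τ n) (s : ℕ → Fin n) (d m : ℕ) (ρ : Set τ) :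
    (countClause d m ρ).sat M s ↔ m ≤ typeCount M ρ ∧ (m < d → typeCount M ρ ≤ m) := by
  have hcount : (freshPoints M ρ s 0).ncard = typeCount M ρ := by simp [freshPoints, typeCount]
  unfold countClause
  split_ifs with hm
  · simp [sat, sat_neg, sat_atLeast, hcount, hm]
  · simp [sat, sat_atLeast, verum, hcount, hm]

theorem sat_classSentence (d : ℕ) (M M' : UModel τ n) (s : ℕ → Fin n) :
    (classSentence d M).sat M' s ↔ EquivD d M' M := by
  simp only [classSentence, sat_foldr_and, List.mem_map, Finset.mem_toList, Finset.mem_univ,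
    true_and, forall_exists_index, forall_apply_eq_imp_iff, sat_countClause]
  refine ⟨fun h ρ => ?_, fun h => ⟨fun ρ => ?_, fun _ => rfl⟩⟩
  · have := h.1 ρ
    omega
  · have := h ρ
    omega

theorem qrank_classSentence_le {d : ℕ} (hd : 1 ≤ d) (M : UModel τ n) :
    (classSentence d M).qrank ≤ d := by
  refine qrank_foldr_and_le hd ?_
  simp only [List.mem_map, Finset.mem_toList, Finset.mem_univ, true_and]
  rintro _ ⟨ρ, rfl⟩
  have h₀ := qrank_atLeast_le ρ (min (typeCount M ρ) d) 0
  have h₁ := qrank_atLeast_le ρ (min (typeCount M ρ) d + 1) 0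
  unfold countClause
  split_ifs <;> simp only [qrank, qrank_neg, verum] at * <;> omega

theorem isSentence_classSentence (d : ℕ) (M : UModel τ n) : (classSentence d M).IsSentence := by
  refine Finset.subset_empty.1 (freeVars_foldr_and_subset (by simp [verum, freeVars]) ?_)
  simp only [List.mem_map, Finset.mem_toList, Finset.mem_univ, true_and]
  rintro _ ⟨ρ, rfl⟩
  unfold countClause
  have h₀ := freeVars_atLeast_subset ρ (min (typeCount M ρ) d) 0
  have h₁ := freeVars_atLeast_subset ρ (min (typeCount M ρ) d + 1) 0
  split_ifs <;> simp_all [freeVars, freeVars_neg, verum]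

theorem definesD_classSentence (d : ℕ) (M : UModel τ n) : DefinesD d (classSentence d M) M := by
  intro M'
  cases n with
  | zero =>
    exact iff_of_true (fun s => (s 0).elim0) fun ρ => by simp [typeCount, Set.eq_empty_of_isEmpty]
  | succ n =>
    exact ⟨fun h => (sat_classSentence d M M' 0).1 (h 0),
      fun h s => (sat_classSentence d M M' s).2 h⟩

end ClassSentence

/-- Let the `≡_d`-class of the size-`n` model `M` correspond to the
ascending tuple `m = (m₁,…,m_t)`, `t = 2^{|τ|} ≥ 2`, where `m i = min(|π i|_M, d)` for an
enumeration `π` of all `τ`-types. Then every FO[τ] sentence true exactly in the size-`n`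
models `≡_d`-equivalent to `M` has size at least `3·m_{t-1} − 3`; in particular
`C_d(M) ≥ 3·m_{t-1} − 3`. -/
theorem descCompD_lower_bound (τ : Type) [Fintype τ] {n d : ℕ}
    (M : UModel τ n)
    {t : ℕ} (ht2 : 2 ≤ t)
    (π : Fin t → Set τ) (hbij : Function.Bijective π)
    (m : Fin t → ℕ) (hm : ∀ i, m i = min (typeCount M (π i)) d)
    (hasc : Monotone m) :
    (∀ φ : FO τ, φ.IsSentence → DefinesD d φ M →
        3 * m ⟨t - 2, by omega⟩ - 3 ≤ φ.size) ∧
      3 * m ⟨t - 2, by omega⟩ - 3 ≤ descCompD d M := by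
  set i₁ : Fin t := ⟨t - 2, by omega⟩
  set i₂ : Fin t := ⟨t - 1, by omega⟩
  have h₁ := hm i₁
  have h₂ := hm i₂
  have hle : m i₁ ≤ m i₂ := hasc (Fin.mk_le_mk.2 (by omega))
  have hsize (φ : FO τ) (hφ : φ.IsSentence) (hdef : DefinesD d φ M) : 3 * m i₁ - 3 ≤ φ.size := by
    obtain hk | hk := Nat.eq_zero_or_pos (m i₁)
    · omega
    have hne : π i₁ ≠ π i₂ := hbij.1.ne (Fin.ne_of_val_ne (by simp [i₁, i₂]; omega))
    obtain ⟨M', hM', hnot⟩ :=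
      exists_equivD_not_equivD (d := d) M hne (k := m i₁ - 1) (by omega) (by omega) (by omega)
    have := hdef.three_mul_le_size hφ hM' hnot
    omega
  refine ⟨hsize, ?_⟩
  obtain hk | hk := Nat.lt_or_ge (m i₁) 1
  · omega
  refine le_csInf ⟨_, classSentence d M, isSentence_classSentence d M,
    qrank_classSentence_le (by omega) M, definesD_classSentence d M, rfl⟩ ?_
  rintro _ ⟨φ, hφ, -, hdef, rfl⟩
  exact hsize φ hφ hdef
end

section
/- Let τ be a finite monadic vocabulary, let d be a positive integer, let M be a τ-model of size n, and let h ∈ {1,…,d−1}. If H_B^d(M) < log₂(binomial(n, h)), then C_d(M) < 6h + c_τ. -/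
/-!
Common definitions: unary (monadic) first-order structures, FO[τ] formulas in
negation normal form, formula size / quantifier rank / number of quantifiers,
semantics, description complexity, the equivalence `≡_d`, and the entropies.
-/

open Filter

/-!
Permuting the domain preserves all type counts, so the `≡_d`-class of `M` contains at least
`C(n, a) · C(n - a, b)` models whenever `a` and `b` count the points of `M` realizing two disjoint
sets of types. If the class has fewer than `C(n, h)` elements, some type `π₀` is therefore
realized by more than `n - h` points: otherwise either a single type has its count in
`[h, n - h]`, or, adding up types until the total first reaches `h`, one gets counts
`a, b ≤ h ≤ a + b`, and in both cases the lower bound is at least `C(n, h)`.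
The other types then have fewer than `h < d` points altogether, and the conjunction over
`π ≠ π₀` of "exactly `|π|_M` points have type `π`" is a sentence of quantifier rank at most `d`
defining the `≡_d`-class, of size `6 · (n - |π₀|_M) + O(|τ| · 2^|τ|)`.
-/

open Finset

namespace Nat

theorem choose_le_choose_of_le_half {n k j : ℕ} (hkj : k ≤ j) (hj : j ≤ n / 2) :
    n.choose k ≤ n.choose j := by
  induction j, hkj using Nat.le_induction with
  | base => rfl
  | succ j _ ih => exact (ih (by omega)).trans (choose_le_succ_of_lt_half_left (by omega))

theorem choose_le_choose_of_le_of_add_le {n k j : ℕ} (hkj : k ≤ j) (hjk : j + k ≤ n) :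
    n.choose k ≤ n.choose j := by
  rcases le_or_gt j (n / 2) with hj | hj
  · exact choose_le_choose_of_le_half hkj hj
  · rw [← choose_symm (by omega : j ≤ n)]
    exact choose_le_choose_of_le_half (by omega) (by omega)

theorem choose_le_choose_mul_choose {n k a b : ℕ} (ha : a ≤ k) (hb : b ≤ k) (hk : k ≤ a + b)
    (hn : a + b ≤ n) : n.choose k ≤ n.choose a * (n - a).choose b := by
  calc n.choose k ≤ n.choose k * (n - k).choose (a + b - k) :=
        Nat.le_mul_of_pos_right _ (choose_pos (by omega))
    _ = n.choose (a + b) * (a + b).choose k := (choose_mul hk).symm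
    _ ≤ n.choose (a + b) * (a + b).choose a := by
        gcongr
        rw [← choose_symm hk]
        exact choose_le_choose_of_le_of_add_le (by omega) (by omega)
    _ = n.choose a * (n - a).choose b := by rw [choose_mul (by omega), Nat.add_sub_cancel_left]

theorem pos_and_lt_of_one_lt_choose {n k : ℕ} (h : 1 < n.choose k) : 0 < k ∧ k < n := by
  refine ⟨Nat.pos_of_ne_zero ?_, lt_of_le_of_ne ?_ ?_⟩
  · rintro rfl; simp at h
  · by_contra! hnk; rw [choose_eq_zero_of_lt hnk] at h; omega
  · rintro rfl; simp at h

theorem lt_of_logb_lt_logb {x y : ℕ} (hx : 0 < x) (h : Real.logb 2 x < Real.logb 2 y) :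
    x < y := by
  by_contra! hyx
  rcases y.eq_zero_or_pos with rfl | hy
  · simp only [CharP.cast_eq_zero, Real.logb_zero] at h
    exact h.not_ge (Real.logb_nonneg one_lt_two (by exact_mod_cast hx))
  · exact h.not_ge
      (Real.logb_le_logb_of_le one_lt_two (by exact_mod_cast hy) (by exact_mod_cast hyx))

end Nat

theorem Finset.exists_sum_lt_le_sum_add {ι : Type*} [DecidableEq ι] (s : Finset ι) (f : ι → ℕ)
    {k : ℕ} (hk : 0 < k) (hks : k ≤ ∑ i ∈ s, f i) :
    ∃ t ⊆ s, ∃ i ∈ s, i ∉ t ∧ ∑ j ∈ t, f j < k ∧ k ≤ ∑ j ∈ t, f j + f i := by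
  induction s using Finset.induction_on with
  | empty => simp at hks; omega
  | insert i s hi ih =>
    rw [sum_insert hi] at hks
    by_cases hs : k ≤ ∑ j ∈ s, f j
    · obtain ⟨t, hts, j, hj, hjt, h⟩ := ih hs
      exact ⟨t, hts.trans (subset_insert _ _), j, mem_insert_of_mem hj, hjt, h⟩
    · exact ⟨s, subset_insert _ _, i, mem_insert_self _ _, hi, by omega, by omega⟩

section Tricolour

variable {α : Type*} [DecidableEq α] {A B : Finset α} {x : α}

def tricolour (A B : Finset α) (x : α) : Fin 3 :=
  if x ∈ A then 0 else if x ∈ B then 1 else 2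

theorem tricolour_eq_zero_iff : tricolour A B x = 0 ↔ x ∈ A := by
  unfold tricolour; split_ifs <;> simp_all

theorem tricolour_eq_one_iff (hAB : Disjoint A B) : tricolour A B x = 1 ↔ x ∈ B := by
  unfold tricolour; split_ifs <;> simp_all [disjoint_left.1 hAB]

theorem tricolour_eq_two_iff : tricolour A B x = 2 ↔ x ∉ A ∪ B := by
  unfold tricolour; split_ifs <;> simp_all

theorem card_tricolour_fiber [Fintype α] (hAB : Disjoint A B) (c : Fin 3) :
    Fintype.card {x // tricolour A B x = c} = ![#A, #B, Fintype.card α - (#A + #B)] c := by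
  rw [Fintype.card_subtype]
  fin_cases c
  · simp [tricolour_eq_zero_iff]
  · simp [tricolour_eq_one_iff hAB]
  · change #{x | tricolour A B x = 2} = Fintype.card α - (#A + #B)
    rw [← card_union_of_disjoint hAB, ← card_compl]
    congr 1; ext; simp [tricolour_eq_two_iff]

theorem exists_perm_mem_iff [Fintype α] {A B S T : Finset α} (hAB : Disjoint A B)
    (hST : Disjoint S T) (hA : #A = #S) (hB : #B = #T) :
    ∃ σ : Equiv.Perm α, ∀ x, (σ x ∈ S ↔ x ∈ A) ∧ (σ x ∈ T ↔ x ∈ B) := by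
  have hfib (c : Fin 3) : Fintype.card {x // tricolour A B x = c} =
      Fintype.card {x // tricolour S T x = c} := by
    rw [card_tricolour_fiber hAB, card_tricolour_fiber hST, hA, hB]
  refine ⟨Equiv.ofFiberEquiv fun c => Fintype.equivOfCardEq (hfib c), fun x => ?_⟩
  have hx := Equiv.ofFiberEquiv_map (fun c => Fintype.equivOfCardEq (hfib c)) x
  rw [← tricolour_eq_zero_iff, ← tricolour_eq_one_iff hST, hx, tricolour_eq_zero_iff,
    tricolour_eq_one_iff hAB]
  exact ⟨Iff.rfl, Iff.rfl⟩

end Tricolour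

section CountingModels

variable {τ : Type} {n : ℕ}

theorem iso_comp_perm (M : UModel τ n) (σ : Equiv.Perm (Fin n)) : Iso (M ∘ σ) M := fun π =>
  Set.ncard_preimage_of_injective_subset_range (s := {x | M x = π}) σ.injective (by simp)

open Classical in
theorem typeCount_eq_card (M : UModel τ n) (π : Set τ) : typeCount M π = #{a | M a = π} := by
  simp [typeCount, Set.ncard_eq_toFinset_card']

theorem ncard_setOf_mem_eq_sum (M : UModel τ n) (𝒜 : Finset (Set τ)) :
    {x | M x ∈ 𝒜}.ncard = ∑ π ∈ 𝒜, typeCount M π := by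
  classical
  induction 𝒜 using Finset.induction_on with
  | empty => simp
  | insert π 𝒜 hπ ih =>
    rw [sum_insert hπ, ← ih, typeCount, ← Set.ncard_union_eq]
    · congr 1; ext x; simp
    · exact Set.disjoint_left.2 fun x (hx : M x = π) hx' => hπ (hx ▸ hx')

variable [Fintype τ]

theorem sum_typeCount (M : UModel τ n) : ∑ π, typeCount M π = n := by
  rw [← ncard_setOf_mem_eq_sum]; simp

theorem choose_mul_choose_le_card_iso (M : UModel τ n) {U V : Finset (Set τ)}
    (hUV : Disjoint U V) :
    n.choose (∑ π ∈ U, typeCount M π) *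
        (n - ∑ π ∈ U, typeCount M π).choose (∑ π ∈ V, typeCount M π) ≤
      Nat.card {M' : UModel τ n // Iso M' M} := by
  classical
  have hcard (𝒜 : Finset (Set τ)) : ∑ π ∈ 𝒜, typeCount M π = #{x | M x ∈ 𝒜} := by
    rw [← ncard_setOf_mem_eq_sum, ← Set.ncard_coe_finset]; congr; ext; simp
  rw [hcard, hcard]
  set S : Finset (Fin n) := {x | M x ∈ U}
  set T : Finset (Fin n) := {x | M x ∈ V}
  have hST : Disjoint S T := disjoint_filter.2 fun x _ hU hV => disjoint_left.1 hUV hU hV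
  let pairs := (powersetCard #S (univ : Finset (Fin n))).sigma fun A => powersetCard #T (univ \ A)
  have hpairs : #pairs = n.choose #S * (n - #S).choose #T := by
    rw [card_sigma, sum_congr rfl fun A hA => by
      rw [card_powersetCard, card_sdiff_of_subset (subset_univ A), (mem_powersetCard.1 hA).2]]
    simp
  let positions (M' : UModel τ n) : Σ _ : Finset (Fin n), Finset (Fin n) :=
    ⟨({x | M' x ∈ U} : Finset (Fin n)), ({x | M' x ∈ V} : Finset (Fin n))⟩
  have hsurj : Set.SurjOn positions {M' | Iso M' M} pairs := by
    rintro ⟨A, B⟩ hAB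
    simp only [pairs, mem_coe, mem_sigma, mem_powersetCard, subset_sdiff] at hAB
    obtain ⟨σ, hσ⟩ := exists_perm_mem_iff hAB.2.1.2.symm hST hAB.1.2 hAB.2.2
    refine ⟨M ∘ σ, iso_comp_perm M σ, ?_⟩
    simp only [positions]
    congr <;> ext x
    · simpa [S] using (hσ x).1
    · simpa [T] using (hσ x).2
  rw [← hpairs, Nat.card_eq_fintype_card, Fintype.card_subtype]
  exact card_le_card_of_surjOn positions (by simpa using hsurj)

theorem card_iso_le_card_equivD (M : UModel τ n) (d : ℕ) :
    Nat.card {M' : UModel τ n // Iso M' M} ≤ Nat.card {M' : UModel τ n // EquivD d M' M} :=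
  Nat.card_mono (s := {M' | Iso M' M}) (t := {M' | EquivD d M' M}) (Set.toFinite _)
    fun M' hM' π => by rw [hM' π]

theorem exists_typeCount_add_gt {k : ℕ} (M : UModel τ n) (hk : 0 < k) (hkn : k ≤ n)
    (hN : Nat.card {M' : UModel τ n // Iso M' M} < n.choose k) :
    ∃ π, n < typeCount M π + k := by
  classical
  by_contra! hall
  have hlt (π : Set τ) : typeCount M π < k := by
    by_contra! hkπ
    have hπ := choose_mul_choose_le_card_iso M (disjoint_empty_right {π})
    rw [sum_singleton, sum_empty, Nat.choose_zero_right, mul_one] at hπ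
    exact hN.not_ge ((Nat.choose_le_choose_of_le_of_add_le hkπ (hall π)).trans hπ)
  obtain ⟨𝒜, -, π, -, hπ𝒜, hsum, hksum⟩ :=
    exists_sum_lt_le_sum_add univ (typeCount M) hk (by rwa [sum_typeCount])
  have hsum_le : ∑ ρ ∈ 𝒜, typeCount M ρ + typeCount M π ≤ n := by
    calc _ = ∑ ρ ∈ insert π 𝒜, typeCount M ρ := by rw [sum_insert hπ𝒜, add_comm]
      _ ≤ ∑ ρ, typeCount M ρ := sum_le_sum_of_subset (subset_univ _)
      _ = n := sum_typeCount M
  have hcount := choose_mul_choose_le_card_iso M (disjoint_singleton_right.2 hπ𝒜)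
  rw [sum_singleton] at hcount
  exact hN.not_ge
    ((Nat.choose_le_choose_mul_choose hsum.le (hlt π).le hksum hsum_le).trans hcount)

end CountingModels

section Assignments

variable {α : Type*}

def AgreeFrom (k : ℕ) (s' s : ℕ → α) : Prop := ∀ i, k ≤ i → s' i = s i

theorem agreeFrom_zero {s' s : ℕ → α} : AgreeFrom 0 s' s ↔ s' = s :=
  ⟨fun h => funext fun i => h i i.zero_le, fun h _ _ => h ▸ rfl⟩

theorem exists_agreeFrom_update_iff {s' s : ℕ → α} {k : ℕ} :
    (∃ a, AgreeFrom k s' (Function.update s k a)) ↔ AgreeFrom (k + 1) s' s := by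
  constructor
  · rintro ⟨a, h⟩ i hi
    rw [h i (by omega), Function.update_of_ne (by omega)]
  · refine fun h => ⟨s' k, fun i hi => ?_⟩
    rcases hi.eq_or_lt with rfl | hi
    · simp
    · rw [Function.update_of_ne (by omega), h i hi]

theorem exists_agreeFrom_subset_image_iff [DecidableEq α] (X : Finset α) (s : ℕ → α) (k : ℕ) :
    (∃ s', AgreeFrom k s' s ∧ X ⊆ (range k).image s') ↔ #X ≤ k := by
  constructor
  · rintro ⟨s', -, hX⟩
    exact (card_le_card hX).trans (card_image_le.trans (card_range k).le)
  · intro hX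
    refine ⟨fun i => if h : i < #X then X.equivFin.symm ⟨i, h⟩ else s i,
      fun i hi => dif_neg (by omega), fun x hx => mem_image.2 ⟨X.equivFin ⟨x, hx⟩, ?_, ?_⟩⟩
    · exact mem_range.2 ((X.equivFin ⟨x, hx⟩).isLt.trans_le hX)
    · simp

theorem image_range_update [DecidableEq α] (s : ℕ → α) (k : ℕ) (a : α) :
    (range k).image (Function.update s k a) = (range k).image s :=
  image_congr fun i hi => Function.update_of_ne (by simp at hi; omega) _ _

end Assignments

namespace FO

variable {τ : Type} {n : ℕ}

/- Negation normal form has no `⊤` or `⊥`: the empty conjunction is `x = x`, the empty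
disjunction `x ≠ x`. -/
open Classical in
noncomputable def typeConj (π : Set τ) (x : ℕ) : List τ → FO τ
  | [] => eq x x
  | P :: l => and (if P ∈ π then pos P x else npos P x) (typeConj π x l)

open Classical in
noncomputable def typeDisj (π : Set τ) (x : ℕ) : List τ → FO τ
  | [] => ne x x
  | P :: l => or (if P ∈ π then npos P x else pos P x) (typeDisj π x l)

theorem sat_typeConj (M : UModel τ n) (s : ℕ → Fin n) (π : Set τ) (x : ℕ) (l : List τ) :
    sat M s (typeConj π x l) ↔ ∀ P ∈ l, (P ∈ M (s x) ↔ P ∈ π) := by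
  induction l with
  | nil => simp [typeConj, sat]
  | cons P l ih => simp only [typeConj, sat, ih, List.forall_mem_cons]; split_ifs <;> simp_all [sat]

theorem sat_typeDisj (M : UModel τ n) (s : ℕ → Fin n) (π : Set τ) (x : ℕ) (l : List τ) :
    sat M s (typeDisj π x l) ↔ ∃ P ∈ l, ¬(P ∈ M (s x) ↔ P ∈ π) := by
  induction l with
  | nil => simp [typeDisj, sat]
  | cons P l ih => simp only [typeDisj, sat, ih]; split_ifs <;> simp_all [sat]

theorem size_typeConj (π : Set τ) (x : ℕ) (l : List τ) :
    (typeConj π x l).size = 2 * l.length + 1 := by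
  induction l with
  | nil => rfl
  | cons P l ih =>
    simp only [typeConj, size, ih]; split_ifs <;> simp only [size, List.length_cons] <;> ring

theorem size_typeDisj (π : Set τ) (x : ℕ) (l : List τ) :
    (typeDisj π x l).size = 2 * l.length + 1 := by
  induction l with
  | nil => rfl
  | cons P l ih =>
    simp only [typeDisj, size, ih]; split_ifs <;> simp only [size, List.length_cons] <;> ring

theorem qrank_typeConj (π : Set τ) (x : ℕ) (l : List τ) : (typeConj π x l).qrank = 0 := by
  induction l with
  | nil => rfl
  | cons P l ih => simp only [typeConj, qrank, ih]; split_ifs <;> rfl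

theorem qrank_typeDisj (π : Set τ) (x : ℕ) (l : List τ) : (typeDisj π x l).qrank = 0 := by
  induction l with
  | nil => rfl
  | cons P l ih => simp only [typeDisj, qrank, ih]; split_ifs <;> rfl

theorem freeVars_typeConj (π : Set τ) (x : ℕ) (l : List τ) :
    (typeConj π x l).freeVars = {x} := by
  induction l with
  | nil => simp [typeConj, freeVars]
  | cons P l ih => simp only [typeConj, freeVars, ih]; split_ifs <;> simp [freeVars]

theorem freeVars_typeDisj (π : Set τ) (x : ℕ) (l : List τ) :
    (typeDisj π x l).freeVars = {x} := by
  induction l with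
  | nil => simp [typeDisj, freeVars]
  | cons P l ih => simp only [typeDisj, freeVars, ih]; split_ifs <;> simp [freeVars]

def allBlock : ℕ → FO τ → FO τ
  | 0, φ => φ
  | k + 1, φ => all k (allBlock k φ)

def exBlock : ℕ → FO τ → FO τ
  | 0, φ => φ
  | k + 1, φ => ex k (exBlock k φ)

theorem sat_allBlock (M : UModel τ n) (k : ℕ) (φ : FO τ) (s : ℕ → Fin n) :
    sat M s (allBlock k φ) ↔ ∀ s', AgreeFrom k s' s → sat M s' φ := by
  induction k generalizing s with
  | zero => simp [allBlock, agreeFrom_zero]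
  | succ k ih =>
    simp only [allBlock, sat, ih, ← exists_agreeFrom_update_iff, forall_exists_index]
    exact forall_comm

theorem sat_exBlock (M : UModel τ n) (k : ℕ) (φ : FO τ) (s : ℕ → Fin n) :
    sat M s (exBlock k φ) ↔ ∃ s', AgreeFrom k s' s ∧ sat M s' φ := by
  induction k generalizing s with
  | zero => simp [exBlock, agreeFrom_zero]
  | succ k ih =>
    simp only [exBlock, sat, ih, ← exists_agreeFrom_update_iff]
    exact exists_comm.trans (exists_congr fun _ => exists_and_right)

theorem size_allBlock (k : ℕ) (φ : FO τ) : (allBlock k φ).size = φ.size + k := by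
  induction k with
  | zero => rfl
  | succ k ih => simp only [allBlock, size, ih]; ring

theorem size_exBlock (k : ℕ) (φ : FO τ) : (exBlock k φ).size = φ.size + k := by
  induction k with
  | zero => rfl
  | succ k ih => simp only [exBlock, size, ih]; ring

theorem qrank_allBlock (k : ℕ) (φ : FO τ) : (allBlock k φ).qrank = φ.qrank + k := by
  induction k with
  | zero => rfl
  | succ k ih => simp only [allBlock, qrank, ih]; ring

theorem qrank_exBlock (k : ℕ) (φ : FO τ) : (exBlock k φ).qrank = φ.qrank + k := by
  induction k with
  | zero => rfl
  | succ k ih => simp only [exBlock, qrank, ih]; ring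

theorem freeVars_allBlock (k : ℕ) (φ : FO τ) :
    (allBlock k φ).freeVars = φ.freeVars \ range k := by
  induction k with
  | zero => simp [allBlock]
  | succ k ih =>
    simp only [allBlock, freeVars, ih, range_add_one, sdiff_insert, sdiff_singleton_eq_erase]

theorem freeVars_exBlock (k : ℕ) (φ : FO τ) :
    (exBlock k φ).freeVars = φ.freeVars \ range k := by
  induction k with
  | zero => simp [exBlock]
  | succ k ih =>
    simp only [exBlock, freeVars, ih, range_add_one, sdiff_insert, sdiff_singleton_eq_erase]

def conj : List (FO τ) → FO τ
  | [] => all 0 (eq 0 0)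
  | φ :: l => and φ (conj l)

theorem sat_conj (M : UModel τ n) (s : ℕ → Fin n) (l : List (FO τ)) :
    sat M s (conj l) ↔ ∀ φ ∈ l, sat M s φ := by
  induction l with
  | nil => simp [conj, sat]
  | cons φ l ih => simp [conj, sat, ih]

theorem size_conj (l : List (FO τ)) : (conj l).size = (l.map fun φ => φ.size + 1).sum + 2 := by
  induction l with
  | nil => rfl
  | cons φ l ih => simp only [conj, size, ih, List.map_cons, List.sum_cons]; ring

theorem qrank_conj_le {d : ℕ} (hd : 1 ≤ d) {l : List (FO τ)} (hl : ∀ φ ∈ l, φ.qrank ≤ d) :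
    (conj l).qrank ≤ d := by
  induction l with
  | nil => exact hd
  | cons φ l ih => simp_all [conj, qrank]

theorem freeVars_conj {l : List (FO τ)} (hl : ∀ φ ∈ l, φ.freeVars = ∅) :
    (conj l).freeVars = ∅ := by
  induction l with
  | nil => simp [conj, freeVars]
  | cons φ l ih => simp_all [conj, freeVars]

variable [Fintype τ]

noncomputable def ofType (π : Set τ) (x : ℕ) : FO τ := typeConj π x univ.toList

noncomputable def notOfType (π : Set τ) (x : ℕ) : FO τ := typeDisj π x univ.toList

theorem sat_ofType (M : UModel τ n) (s : ℕ → Fin n) (π : Set τ) (x : ℕ) :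
    sat M s (ofType π x) ↔ M (s x) = π := by
  simp [ofType, sat_typeConj, Set.ext_iff]

theorem sat_notOfType (M : UModel τ n) (s : ℕ → Fin n) (π : Set τ) (x : ℕ) :
    sat M s (notOfType π x) ↔ M (s x) ≠ π := by
  simp [notOfType, sat_typeDisj, Set.ext_iff]

theorem size_ofType (π : Set τ) (x : ℕ) : (ofType π x).size = 2 * Fintype.card τ + 1 := by
  simp [ofType, size_typeConj]

theorem size_notOfType (π : Set τ) (x : ℕ) :
    (notOfType π x).size = 2 * Fintype.card τ + 1 := by
  simp [notOfType, size_typeDisj]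

theorem qrank_ofType (π : Set τ) (x : ℕ) : (ofType π x).qrank = 0 := qrank_typeConj _ _ _

theorem qrank_notOfType (π : Set τ) (x : ℕ) : (notOfType π x).qrank = 0 := qrank_typeDisj _ _ _

theorem freeVars_ofType (π : Set τ) (x : ℕ) : (ofType π x).freeVars = {x} :=
  freeVars_typeConj _ _ _

theorem freeVars_notOfType (π : Set τ) (x : ℕ) : (notOfType π x).freeVars = {x} :=
  freeVars_typeDisj _ _ _

noncomputable def ofTypeAvoiding (π : Set τ) (x : ℕ) : ℕ → FO τ
  | 0 => ofType π x
  | k + 1 => and (ofTypeAvoiding π x k) (ne x k)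

noncomputable def notOfTypeOrAmong (π : Set τ) (x : ℕ) : ℕ → FO τ
  | 0 => notOfType π x
  | k + 1 => or (notOfTypeOrAmong π x k) (eq x k)

theorem sat_ofTypeAvoiding (M : UModel τ n) (s : ℕ → Fin n) (π : Set τ) (x k : ℕ) :
    sat M s (ofTypeAvoiding π x k) ↔ M (s x) = π ∧ s x ∉ (range k).image s := by
  induction k with
  | zero => simp [ofTypeAvoiding, sat_ofType]
  | succ k ih =>
    simp only [ofTypeAvoiding, sat, ih, range_add_one, image_insert, mem_insert]; tauto

theorem sat_notOfTypeOrAmong (M : UModel τ n) (s : ℕ → Fin n) (π : Set τ) (x k : ℕ) :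
    sat M s (notOfTypeOrAmong π x k) ↔ M (s x) ≠ π ∨ s x ∈ (range k).image s := by
  induction k with
  | zero => simp [notOfTypeOrAmong, sat_notOfType]
  | succ k ih =>
    simp only [notOfTypeOrAmong, sat, ih, range_add_one, image_insert, mem_insert]; tauto

theorem size_ofTypeAvoiding (π : Set τ) (x k : ℕ) :
    (ofTypeAvoiding π x k).size = 2 * Fintype.card τ + 1 + 2 * k := by
  induction k with
  | zero => exact size_ofType π x
  | succ k ih => simp only [ofTypeAvoiding, size, ih]; ring

theorem size_notOfTypeOrAmong (π : Set τ) (x k : ℕ) :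
    (notOfTypeOrAmong π x k).size = 2 * Fintype.card τ + 1 + 2 * k := by
  induction k with
  | zero => exact size_notOfType π x
  | succ k ih => simp only [notOfTypeOrAmong, size, ih]; ring

theorem qrank_ofTypeAvoiding (π : Set τ) (x k : ℕ) : (ofTypeAvoiding π x k).qrank = 0 := by
  induction k with
  | zero => exact qrank_ofType π x
  | succ k ih => simp [ofTypeAvoiding, qrank, ih]

theorem qrank_notOfTypeOrAmong (π : Set τ) (x k : ℕ) : (notOfTypeOrAmong π x k).qrank = 0 := by
  induction k with
  | zero => exact qrank_notOfType π x
  | succ k ih => simp [notOfTypeOrAmong, qrank, ih]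

theorem freeVars_ofTypeAvoiding (π : Set τ) (x k : ℕ) :
    (ofTypeAvoiding π x k).freeVars = insert x (range k) := by
  induction k with
  | zero => simp [ofTypeAvoiding, freeVars_ofType]
  | succ k ih => ext; simp [ofTypeAvoiding, freeVars, ih, range_add_one]

theorem freeVars_notOfTypeOrAmong (π : Set τ) (x k : ℕ) :
    (notOfTypeOrAmong π x k).freeVars = insert x (range k) := by
  induction k with
  | zero => simp [notOfTypeOrAmong, freeVars_notOfType]
  | succ k ih => ext; simp [notOfTypeOrAmong, freeVars, ih, range_add_one]

noncomputable def moreThan (π : Set τ) (k : ℕ) : FO τ :=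
  allBlock k (ex k (ofTypeAvoiding π k k))

noncomputable def atMost (π : Set τ) (k : ℕ) : FO τ :=
  exBlock k (all k (notOfTypeOrAmong π k k))

theorem sat_moreThan (M : UModel τ n) (s : ℕ → Fin n) (π : Set τ) (k : ℕ) :
    sat M s (moreThan π k) ↔ k < typeCount M π := by
  classical
  rw [typeCount_eq_card, lt_iff_not_ge, ← exists_agreeFrom_subset_image_iff _ s k, moreThan,
    sat_allBlock]
  simp only [sat, sat_ofTypeAvoiding, Function.update_self, image_range_update, not_exists,
    not_and, not_subset, mem_filter, mem_univ, true_and]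

theorem sat_atMost (M : UModel τ n) (s : ℕ → Fin n) (π : Set τ) (k : ℕ) :
    sat M s (atMost π k) ↔ typeCount M π ≤ k := by
  classical
  rw [typeCount_eq_card, ← exists_agreeFrom_subset_image_iff _ s k, atMost, sat_exBlock]
  simp only [sat, sat_notOfTypeOrAmong, Function.update_self, image_range_update, subset_iff,
    mem_filter, mem_univ, true_and, or_iff_not_imp_left, not_not]

theorem size_moreThan (π : Set τ) (k : ℕ) :
    (moreThan π k).size = 2 * Fintype.card τ + 2 + 3 * k := by
  simp only [moreThan, size_allBlock, size, size_ofTypeAvoiding]; ring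

theorem size_atMost (π : Set τ) (k : ℕ) :
    (atMost π k).size = 2 * Fintype.card τ + 2 + 3 * k := by
  simp only [atMost, size_exBlock, size, size_notOfTypeOrAmong]; ring

theorem qrank_moreThan (π : Set τ) (k : ℕ) : (moreThan π k).qrank = k + 1 := by
  simp only [moreThan, qrank_allBlock, qrank, qrank_ofTypeAvoiding]; ring

theorem qrank_atMost (π : Set τ) (k : ℕ) : (atMost π k).qrank = k + 1 := by
  simp only [atMost, qrank_exBlock, qrank, qrank_notOfTypeOrAmong]; ring

theorem freeVars_moreThan (π : Set τ) (k : ℕ) : (moreThan π k).freeVars = ∅ := by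
  ext; simp [moreThan, freeVars_allBlock, freeVars, freeVars_ofTypeAvoiding]; omega

theorem freeVars_atMost (π : Set τ) (k : ℕ) : (atMost π k).freeVars = ∅ := by
  ext; simp [atMost, freeVars_exBlock, freeVars, freeVars_notOfTypeOrAmong]; omega

noncomputable def exactly (π : Set τ) : ℕ → FO τ
  | 0 => atMost π 0
  | k + 1 => and (moreThan π k) (atMost π (k + 1))

theorem sat_exactly (M : UModel τ n) (s : ℕ → Fin n) (π : Set τ) (m : ℕ) :
    sat M s (exactly π m) ↔ typeCount M π = m := by
  cases m <;> simp only [exactly, sat, sat_moreThan, sat_atMost] <;> omega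

theorem size_exactly_le (π : Set τ) (m : ℕ) :
    (exactly π m).size ≤ 6 * m + 4 * Fintype.card τ + 2 := by
  cases m <;> simp only [exactly, size, size_moreThan, size_atMost] <;> omega

theorem qrank_exactly (π : Set τ) (m : ℕ) : (exactly π m).qrank = m + 1 := by
  cases m <;> simp [exactly, qrank, qrank_moreThan, qrank_atMost]

theorem freeVars_exactly (π : Set τ) (m : ℕ) : (exactly π m).freeVars = ∅ := by
  cases m <;> simp [exactly, freeVars, freeVars_moreThan, freeVars_atMost]

end FO

theorem descCompD_le_size {τ : Type} {n d : ℕ} {M : UModel τ n} {φ : FO τ}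
    (hφ : φ.IsSentence) (hq : φ.qrank ≤ d) (hdef : DefinesD d φ M) : descCompD d M ≤ φ.size :=
  Nat.sInf_le ⟨φ, hφ, hq, hdef, rfl⟩

section TypeCountSentence

variable {τ : Type} [Fintype τ] {n d : ℕ}

theorem equivD_iff_typeCount_eq_of_lt {M M' : UModel τ n} {π₀ : Set τ}
    (hsmall : ∀ π ≠ π₀, typeCount M π < d) :
    EquivD d M' M ↔ ∀ π ≠ π₀, typeCount M' π = typeCount M π := by
  refine ⟨fun h π hπ => by have := h π; have := hsmall π hπ; omega, fun h π => ?_⟩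
  rcases eq_or_ne π π₀ with rfl | hπ
  · have hrest : ∑ ρ ∈ univ.erase π, typeCount M' ρ = ∑ ρ ∈ univ.erase π, typeCount M ρ :=
      sum_congr rfl fun ρ hρ => h ρ (ne_of_mem_erase hρ)
    have hM' := sum_typeCount M'
    have hM := sum_typeCount M
    rw [← sum_erase_add _ _ (mem_univ π)] at hM' hM
    omega
  · rw [h π hπ]

/- The count of `π₀` is left out: it is determined by the others, and may be too large to be
pinned down within quantifier rank `d`. -/
noncomputable def typeCountSentence (M : UModel τ n) (π₀ : Set τ) : FO τ :=
  FO.conj ((univ.erase π₀).toList.map fun π => FO.exactly π (typeCount M π))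

theorem isSentence_typeCountSentence (M : UModel τ n) (π₀ : Set τ) :
    (typeCountSentence M π₀).IsSentence :=
  FO.freeVars_conj (by simp [FO.freeVars_exactly])

theorem qrank_typeCountSentence_le {M : UModel τ n} {π₀ : Set τ} (hd : 1 ≤ d)
    (hsmall : ∀ π ≠ π₀, typeCount M π < d) : (typeCountSentence M π₀).qrank ≤ d :=
  FO.qrank_conj_le hd (by simpa [FO.qrank_exactly] using hsmall)

theorem definesD_typeCountSentence {M : UModel τ n} {π₀ : Set τ} (hn : 0 < n)
    (hsmall : ∀ π ≠ π₀, typeCount M π < d) : DefinesD d (typeCountSentence M π₀) M := by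
  intro M'
  have : Nonempty (ℕ → Fin n) := ⟨fun _ => ⟨0, hn⟩⟩
  simp [equivD_iff_typeCount_eq_of_lt hsmall, Sat, typeCountSentence, FO.sat_conj,
    FO.sat_exactly]

theorem size_typeCountSentence_le (M : UModel τ n) (π₀ : Set τ) :
    (typeCountSentence M π₀).size ≤ 6 * ∑ π ∈ univ.erase π₀, typeCount M π +
      (Fintype.card (Set τ) - 1) * (4 * Fintype.card τ + 3) + 2 := by
  rw [typeCountSentence, FO.size_conj, List.map_map, sum_map_toList]
  gcongr
  calc _ ≤ ∑ π ∈ univ.erase π₀, (6 * typeCount M π + (4 * Fintype.card τ + 3)) :=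
        sum_le_sum fun π _ => by have := FO.size_exactly_le π (typeCount M π); simp; omega
    _ = _ := by rw [sum_add_distrib, ← mul_sum, sum_const, card_erase_of_mem (mem_univ _),
        card_univ, smul_eq_mul]

theorem six_mul_add_lt_cTau {r h : ℕ} (hr : r < h) :
    6 * r + (Fintype.card (Set τ) - 1) * (4 * Fintype.card τ + 3) + 2 < 6 * h + cTau τ := by
  rw [Fintype.card_set, cTau]
  obtain hc | hc := (Fintype.card τ).eq_zero_or_pos
  · simp [hc]; omega
  · have : (2 ^ Fintype.card τ - 1) * (4 * Fintype.card τ + 3) ≤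
        2 ^ Fintype.card τ * (7 * Fintype.card τ) := Nat.mul_le_mul (Nat.sub_le _ _) (by omega)
    nlinarith

end TypeCountSentence

theorem descCompD_entropy_upper_general (τ : Type) [Fintype τ] {n d : ℕ}
    (M : UModel τ n) (h : ℕ) (h2 : h < d)
    (hH : HBd d M < Real.logb 2 (n.choose h : ℝ)) :
    descCompD d M < 6 * h + cTau τ := by
  have : Nonempty {M' : UModel τ n // Iso M' M} := ⟨⟨M, fun _ => rfl⟩⟩
  have hiso : 0 < Nat.card {M' : UModel τ n // Iso M' M} := Nat.card_pos
  have hN : Nat.card {M' : UModel τ n // Iso M' M} < n.choose h :=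
    (card_iso_le_card_equivD M d).trans_lt <|
      Nat.lt_of_logb_lt_logb (hiso.trans_le (card_iso_le_card_equivD M d)) hH
  obtain ⟨hh, hhn⟩ := Nat.pos_and_lt_of_one_lt_choose (Nat.lt_of_le_of_lt hiso hN)
  obtain ⟨π₀, hπ₀⟩ := exists_typeCount_add_gt M hh hhn.le hN
  have hrest : ∑ π ∈ univ.erase π₀, typeCount M π < h := by
    have := sum_erase_add univ (typeCount M) (mem_univ π₀)
    rw [sum_typeCount] at this
    omega
  have hsmall : ∀ π ≠ π₀, typeCount M π < d := fun π hπ =>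
    ((single_le_sum (fun _ _ => Nat.zero_le _) (mem_erase.2 ⟨hπ, mem_univ π⟩)).trans_lt
      hrest).trans h2
  calc descCompD d M ≤ (typeCountSentence M π₀).size :=
        descCompD_le_size (isSentence_typeCountSentence M π₀)
          (qrank_typeCountSentence_le (by omega) hsmall)
          (definesD_typeCountSentence (by omega) hsmall)
    _ ≤ _ := size_typeCountSentence_le M π₀
    _ < 6 * h + cTau τ := six_mul_add_lt_cTau hrest

/-- Let `d ≥ 1`, `M` a `τ`-model of size `n`, and `h ∈ {1,…,d−1}`.
If `H_B^d(M) < log₂(C(n,h))`, then `C_d(M) < 6h + c_τ`. -/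
theorem descCompD_entropy_upper (τ : Type) [Fintype τ] {n d : ℕ} (hd : 1 ≤ d)
    (M : UModel τ n) (h : ℕ) (h1 : 1 ≤ h) (h2 : h < d)
    (hH : HBd d M < Real.logb 2 (n.choose h : ℝ)) :
    descCompD d M < 6 * h + cTau τ :=
  descCompD_entropy_upper_general τ M h h2 hH
end
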